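/- arXiv:1208.3776 — 4 statements merged into one kernel-verified Lean document; each statement's English description precedes it below -/
import Mathlib

section
/- Let N ≥ 1, let e, n ∈ ℝ^N be unit vectors, n̄ = n − ⟨n,e⟩e, and let h > 0 satisfy ‖n̄‖ ≤ √h. Let v, w ∈ ℝ^N with ⟨w,e⟩ = 0 and ⟨v+w,e⟩ = ⟨v,e⟩, set ξ = v + w and ξ' = ξ − 2⟨ξ,n⟩n. Then |⟨ξ',e⟩| ≥ |⟨v,e⟩| − 2√h(‖v‖ + ‖w‖) − 2h|⟨v,e⟩|. -/
open RealInnerProductSpace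

set_option maxHeartbeats 1000000

/-- lower bound on the normal component of the reflected velocity
over a wall of flatness parameter `h`. -/
theorem stmt_4 (N : ℕ) (hN : 1 ≤ N) (e n : EuclideanSpace ℝ (Fin N))
    (he : ‖e‖ = 1) (hn : ‖n‖ = 1)
    (nb : EuclideanSpace ℝ (Fin N)) (hnb : nb = n - ⟪n, e⟫ • e)
    (h : ℝ) (hh : 0 < h) (hflat : ‖nb‖ ≤ Real.sqrt h)
    (v w : EuclideanSpace ℝ (Fin N))
    (hw : ⟪w, e⟫ = 0) (hvw : ⟪v + w, e⟫ = ⟪v, e⟫)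
    (ξ ξ' : EuclideanSpace ℝ (Fin N))
    (hξ : ξ = v + w)
    (hξ' : ξ' = ξ - (2 * ⟪ξ, n⟫) • n) :
    |⟪ξ', e⟫| ≥ |⟪v, e⟫| - 2 * Real.sqrt h * (‖v‖ + ‖w‖) - 2 * h * |⟪v, e⟫| := by
  set c : ℝ := ⟪n, e⟫ with hc
  have hee : (⟪e, e⟫ : ℝ) = 1 := by
    rw [real_inner_self_eq_norm_sq, he]; norm_num
  have hnbe : (⟪nb, e⟫ : ℝ) = 0 := by
    rw [hnb, inner_sub_left, real_inner_smul_left, hee]; ring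
  have hnn : nb + c • e = n := by rw [hnb]; abel
  have hnorm : ‖nb‖ ^ 2 + c ^ 2 = 1 := by
    have h1 : ‖nb + c • e‖ ^ 2 = ‖nb‖ ^ 2 + 2 * ⟪nb, c • e⟫ + ‖c • e‖ ^ 2 :=
      norm_add_sq_real _ _
    rw [hnn, hn] at h1
    rw [real_inner_smul_right, hnbe, norm_smul, he] at h1
    simp at h1
    nlinarith [sq_abs c]
  have hξe : (⟪ξ, e⟫ : ℝ) = ⟪v, e⟫ := by rw [hξ]; exact hvw
  have hξn : (⟪ξ, n⟫ : ℝ) = ⟪ξ, nb⟫ + c * ⟪v, e⟫ := by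
    rw [← hnn, inner_add_right, real_inner_smul_right, hξe]
  have hξ'e : (⟪ξ', e⟫ : ℝ) = ⟪v, e⟫ - 2 * (⟪ξ, nb⟫ + c * ⟪v, e⟫) * c := by
    rw [hξ', inner_sub_left, real_inner_smul_left, hξe, hξn]
  set A : ℝ := ⟪v, e⟫
  set B : ℝ := ⟪ξ, nb⟫ with hB
  have hs : ‖nb‖ ^ 2 ≤ h := by
    nlinarith [Real.sq_sqrt hh.le, norm_nonneg nb, Real.sqrt_nonneg h]
  have hc1 : c ^ 2 ≤ 1 := by nlinarith [sq_nonneg ‖nb‖]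
  have hBle : |B| ≤ Real.sqrt h * (‖v‖ + ‖w‖) := by
    calc |B| ≤ ‖ξ‖ * ‖nb‖ := abs_real_inner_le_norm _ _
    _ ≤ (‖v‖ + ‖w‖) * Real.sqrt h := by
        apply mul_le_mul _ hflat (norm_nonneg _) (by positivity)
        rw [hξ]; exact norm_add_le _ _
    _ = Real.sqrt h * (‖v‖ + ‖w‖) := mul_comm _ _
  have hT : (⟪ξ', e⟫ : ℝ) = A * (1 - 2 * c ^ 2) - 2 * B * c := by
    rw [hξ'e]; ring
  have f1 : |A * (1 - 2 * c ^ 2)| - |2 * B * c| ≤ |⟪ξ', e⟫| := by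
    rw [hT]; exact abs_sub_abs_le_abs_sub _ _
  rw [abs_mul, abs_mul, abs_mul] at f1
  have hcabs : |c| ≤ 1 := by nlinarith [sq_abs c, abs_nonneg c]
  have habs1 : 1 - 2 * h ≤ |1 - 2 * c ^ 2| := by
    have h3 := neg_abs_le (1 - 2 * c ^ 2)
    have h4 : 1 - h ≤ c ^ 2 := by nlinarith
    linarith
  have hA0 : (0:ℝ) ≤ |A| := abs_nonneg _
  have hB0 : (0:ℝ) ≤ |B| := abs_nonneg _
  have h2 : |A| * (1 - 2 * h) ≤ |A| * |1 - 2 * c ^ 2| :=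
    mul_le_mul_of_nonneg_left habs1 hA0
  have h5 : |(2:ℝ)| * |B| * |c| ≤ 2 * |B| := by
    rw [abs_two]
    nlinarith
  linarith
end

section
/- Let m ≥ 2, λ₁, …, λ_{m−1} ≥ 0, σ > 0, T ≥ 0, let H = {v ∈ ℝ^m : v_m < 0}, let ρ(v) = |v_m| exp(−‖v‖²/(2σ²)), and let L be the MB-Laplacian defined by (1/2)(LΦ)(v) = (Σ_{i<m} λᵢ vᵢ² + T)[(1/v_m − v_m/σ²) Φ_m(v) + Φ_{mm}(v)] + Σ_{i<m} λᵢ( −2 vᵢ Φᵢ(v) + v_m² Φᵢᵢ(v) − 2 vᵢ v_m Φ_{im}(v) ) − (Σ_{i<m} λᵢ − σ^{-2} Σ_{i<m} λᵢ vᵢ²) v_m Φ_m(v), where subscripts denote partial derivatives. Then for every smooth compactly supported function Φ : H → ℝ, ∫_H (LΦ)(v) ρ(v) dv = 0. -/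
open Finset MeasureTheory

/-- Partial derivative in the `i`-th coordinate direction. -/
noncomputable def pD {N : ℕ} (i : Fin N) (f : EuclideanSpace ℝ (Fin N) → ℝ) :
    EuclideanSpace ℝ (Fin N) → ℝ :=
  fun v => fderiv ℝ f v (EuclideanSpace.single i 1)

/-- The MB-Laplacian on the lower half-space of `ℝ^{n+1}`, in coordinates
adapted to the eigenvectors of `Λ` (with eigenvalues `lam i`), with temperature
parameter `σ²` and `T = Tr(CΛ)`. -/
noncomputable def MBLap (n : ℕ) (lam : Fin n → ℝ) (σ T : ℝ)
    (Φ : EuclideanSpace ℝ (Fin (n + 1)) → ℝ) :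
    EuclideanSpace ℝ (Fin (n + 1)) → ℝ :=
  fun v =>
    2 * (((∑ i : Fin n, lam i * v i.castSucc ^ 2) + T) *
          ((1 / v (Fin.last n) - v (Fin.last n) / σ ^ 2) * pD (Fin.last n) Φ v
            + pD (Fin.last n) (pD (Fin.last n) Φ) v)
        + (∑ i : Fin n, lam i *
            (-2 * v i.castSucc * pD i.castSucc Φ v
              + v (Fin.last n) ^ 2 * pD i.castSucc (pD i.castSucc Φ) v
              - 2 * v i.castSucc * v (Fin.last n) * pD i.castSucc (pD (Fin.last n) Φ) v))
        - ((∑ i : Fin n, lam i)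
              - σ ^ (-2 : ℤ) * ∑ i : Fin n, lam i * v i.castSucc ^ 2)
            * v (Fin.last n) * pD (Fin.last n) Φ v)

variable {N : ℕ}

@[fun_prop] lemma differentiable_coord (k : Fin N) :
    Differentiable ℝ (fun v : EuclideanSpace ℝ (Fin N) => v k) :=
  (EuclideanSpace.proj (𝕜 := ℝ) k).differentiable

lemma pD_mul {f g : EuclideanSpace ℝ (Fin N) → ℝ} (j : Fin N) (v)
    (hf : DifferentiableAt ℝ f v) (hg : DifferentiableAt ℝ g v) :
    pD j (fun w => f w * g w) v = pD j f v * g v + f v * pD j g v := by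
  rw [pD, fderiv_fun_mul hf hg]; simp [pD]; ring

lemma pD_add {f g : EuclideanSpace ℝ (Fin N) → ℝ} (j : Fin N) (v)
    (hf : DifferentiableAt ℝ f v) (hg : DifferentiableAt ℝ g v) :
    pD j (fun w => f w + g w) v = pD j f v + pD j g v := by
  rw [pD, fderiv_fun_add hf hg]; simp [pD]

lemma pD_sub {f g : EuclideanSpace ℝ (Fin N) → ℝ} (j : Fin N) (v)
    (hf : DifferentiableAt ℝ f v) (hg : DifferentiableAt ℝ g v) :
    pD j (fun w => f w - g w) v = pD j f v - pD j g v := by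
  rw [pD, fderiv_fun_sub hf hg]; simp [pD]

lemma pD_const (j : Fin N) (c : ℝ) (v) : pD j (fun _ : EuclideanSpace ℝ (Fin N) => c) v = 0 := by
  rw [pD, fderiv_fun_const]; simp

lemma pD_div_const {f : EuclideanSpace ℝ (Fin N) → ℝ} (j : Fin N) (c : ℝ) (v)
    (hf : DifferentiableAt ℝ f v) :
    pD j (fun w => f w / c) v = pD j f v / c := by
  simp only [div_eq_mul_inv]
  rw [pD, fderiv_mul_const hf]; simp [pD]; ring

lemma pD_neg {f : EuclideanSpace ℝ (Fin N) → ℝ} (j : Fin N) (v) :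
    pD j (fun w => -f w) v = -pD j f v := by
  rw [pD, fderiv_fun_neg]; simp [pD]

lemma pD_sum {ι : Type*} {s : Finset ι} {f : ι → EuclideanSpace ℝ (Fin N) → ℝ} (j : Fin N) (v)
    (hf : ∀ i ∈ s, DifferentiableAt ℝ (f i) v) :
    pD j (fun w => ∑ i ∈ s, f i w) v = ∑ i ∈ s, pD j (f i) v := by
  rw [pD, fderiv_fun_sum hf]; simp [pD]

lemma pD_exp {f : EuclideanSpace ℝ (Fin N) → ℝ} (j : Fin N) (v)
    (hf : DifferentiableAt ℝ f v) :
    pD j (fun w => Real.exp (f w)) v = Real.exp (f v) * pD j f v := by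
  rw [pD, fderiv_exp hf]; simp [pD]



lemma contDiff_pD {f : EuclideanSpace ℝ (Fin N) → ℝ} (k : Fin N) (hf : ContDiff ℝ (⊤ : ℕ∞) f) :
    ContDiff ℝ (⊤ : ℕ∞) (pD k f) :=
  (hf.fderiv_right (m := (⊤ : ℕ∞)) (by simp)).clm_apply contDiff_const

@[fun_prop] lemma differentiable_pD {f : EuclideanSpace ℝ (Fin N) → ℝ} (k : Fin N)
    (hf : ContDiff ℝ (⊤ : ℕ∞) f) : Differentiable ℝ (pD k f) :=
  (contDiff_pD k hf).differentiable (by simp)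

lemma pD_eq_zero_of_not_mem {f : EuclideanSpace ℝ (Fin N) → ℝ} (k : Fin N) {v}
    (hv : v ∉ tsupport f) : pD k f v = 0 := by
  have h : f =ᶠ[nhds v] 0 := notMem_tsupport_iff_eventuallyEq.1 hv
  have : (0 : EuclideanSpace ℝ (Fin N) → ℝ) = fun _ => (0:ℝ) := rfl
  rw [pD, h.fderiv_eq, this, fderiv_fun_const]
  simp

lemma support_pD_subset {f : EuclideanSpace ℝ (Fin N) → ℝ} (k : Fin N) :
    Function.support (pD k f) ⊆ tsupport f := fun v hv => by
  by_contra h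
  exact hv (pD_eq_zero_of_not_mem k h)

lemma hasCompactSupport_pD {f : EuclideanSpace ℝ (Fin N) → ℝ} (k : Fin N)
    (hf : HasCompactSupport f) : HasCompactSupport (pD k f) :=
  hf.mono' (support_pD_subset k)

lemma pD_pD_symm {f : EuclideanSpace ℝ (Fin N) → ℝ} (hf : ContDiff ℝ (⊤ : ℕ∞) f) (j k : Fin N) (v) :
    pD j (pD k f) v = pD k (pD j f) v := by
  have hsymm := (hf.contDiffAt (x := v)).isSymmSndFDerivAt (by rw [minSmoothness_of_isRCLikeNormedField]; exact WithTop.coe_le_coe.2 (le_top : (2 : ℕ∞) ≤ ⊤))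
  have hd : DifferentiableAt ℝ (fderiv ℝ f) v :=
    ((hf.fderiv_right (m := (⊤ : ℕ∞)) (by simp)).differentiable (by simp)) v
  show fderiv ℝ (fun w => fderiv ℝ f w (EuclideanSpace.single k 1)) v (EuclideanSpace.single j 1)
      = fderiv ℝ (fun w => fderiv ℝ f w (EuclideanSpace.single j 1)) v (EuclideanSpace.single k 1)
  rw [fderiv_clm_apply hd (differentiableAt_const _), fderiv_clm_apply hd (differentiableAt_const _)]
  simp [hsymm (EuclideanSpace.single j 1) (EuclideanSpace.single k 1)]

lemma integral_deriv_eq_zero' (g : ℝ → ℝ) (hg : ContDiff ℝ 1 g) (hc : HasCompactSupport g) :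
    ∫ t, deriv g t = 0 := by
  obtain ⟨R0, hR0⟩ := hc.isBounded.subset_closedBall 0
  set R := |R0| with hRdef
  have hR : tsupport g ⊆ Metric.closedBall 0 R :=
    hR0.trans (Metric.closedBall_subset_closedBall (le_abs_self R0))
  have hRpos : 0 ≤ R := abs_nonneg R0
  have hb : ∀ t : ℝ, R < |t| → t ∉ tsupport g := by
    intro t ht hmem
    have := hR hmem
    simp only [Metric.mem_closedBall, Real.dist_eq, sub_zero] at this
    linarith
  have h0 : ∀ t ∉ Set.Iic (R + 1), deriv g t = 0 := by
    intro t ht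
    simp only [Set.mem_Iic, not_le] at ht
    have htR : R < |t| := lt_of_lt_of_le (by linarith) (le_abs_self t)
    have h : g =ᶠ[nhds t] 0 := notMem_tsupport_iff_eventuallyEq.1 (hb t htR)
    rw [h.deriv_eq]
    exact deriv_const t 0
  have hgb : g (R + 1) = 0 := by
    by_contra h
    exact hb (R + 1) (by rw [abs_of_nonneg (by linarith)]; linarith)
      (subset_tsupport g (Function.mem_support.2 h))
  rw [← setIntegral_eq_integral_of_forall_compl_eq_zero h0,
    hc.integral_Iic_deriv_eq hg (R + 1), hgb]

lemma hasCompactSupport_line {N : ℕ} (f : EuclideanSpace ℝ (Fin N) → ℝ)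
    (hc : HasCompactSupport f) (c w : EuclideanSpace ℝ (Fin N)) (hw : ‖w‖ = 1) :
    HasCompactSupport (fun t : ℝ => f (c + t • w)) := by
  obtain ⟨R0, hR0⟩ := hc.isBounded.subset_closedBall 0
  apply HasCompactSupport.intro (isCompact_Icc (a := -(|R0| + ‖c‖)) (b := |R0| + ‖c‖))
  intro t ht
  by_contra h
  have hmem : c + t • w ∈ tsupport f := subset_tsupport f (Function.mem_support.2 h)
  have h1 : ‖c + t • w‖ ≤ |R0| := by
    have := hR0 hmem
    simp only [Metric.mem_closedBall, dist_zero_right] at this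
    exact this.trans (le_abs_self R0)
  have h2 : |t| ≤ |R0| + ‖c‖ := by
    have : ‖t • w‖ ≤ ‖c + t • w‖ + ‖c‖ := by
      calc ‖t • w‖ = ‖c + t • w - c‖ := by rw [add_sub_cancel_left]
        _ ≤ ‖c + t • w‖ + ‖c‖ := norm_sub_le _ _
    rw [norm_smul, hw, mul_one] at this
    simp at this
    linarith
  simp only [Set.mem_Icc, not_and_or, not_le] at ht
  rcases ht with ht | ht
  · rcases abs_cases t with ⟨he, _⟩ | ⟨he, _⟩ <;> linarith
  · rcases abs_cases t with ⟨he, _⟩ | ⟨he, _⟩ <;> linarith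

lemma integral_line_pD_zero {N : ℕ} (i : Fin N) (f : EuclideanSpace ℝ (Fin N) → ℝ)
    (hf : ContDiff ℝ (⊤ : ℕ∞) f) (hc : HasCompactSupport f) (c : EuclideanSpace ℝ (Fin N)) :
    ∫ t : ℝ, pD i f (c + t • EuclideanSpace.single i 1) = 0 := by
  set w : EuclideanSpace ℝ (Fin N) := EuclideanSpace.single i 1 with hw
  set g1 : ℝ → ℝ := fun t => f (c + t • w) with hg1
  have hline : ∀ t : ℝ, HasDerivAt (fun t : ℝ => c + t • w) w t := fun t => by
    simpa using ((hasDerivAt_id t).smul_const w).const_add c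
  have hder : ∀ t, HasDerivAt g1 (pD i f (c + t • w)) t := fun t =>
    (hf.differentiable (by simp) _).hasFDerivAt.comp_hasDerivAt t (hline t)
  have hcd : ContDiff ℝ 1 g1 :=
    (hf.of_le (by simp)).comp (contDiff_const.add (contDiff_id.smul contDiff_const))
  have hcs : HasCompactSupport g1 :=
    hasCompactSupport_line f hc c w (by rw [hw, EuclideanSpace.norm_single]; norm_num)
  have hd : ∀ t, deriv g1 t = pD i f (c + t • w) := fun t => (hder t).deriv
  calc ∫ t : ℝ, pD i f (c + t • w) = ∫ t : ℝ, deriv g1 t := by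
        congr 1; funext t; rw [hd t]
    _ = 0 := integral_deriv_eq_zero' g1 hcd hcs

lemma integral_pD_eq_zero {N : ℕ} (i : Fin (N + 1)) (f : EuclideanSpace ℝ (Fin (N + 1)) → ℝ)
    (hf : ContDiff ℝ (⊤ : ℕ∞) f) (hc : HasCompactSupport f) :
    ∫ v, pD i f v = 0 := by
  have hgcont : Continuous (pD i f) := (contDiff_pD i hf).continuous
  have hgcs : HasCompactSupport (pD i f) := hasCompactSupport_pD i hc
  have hgint : Integrable (pD i f) := hgcont.integrable_of_hasCompactSupport hgcs
  set e := (MeasurableEquiv.toLp 2 (Fin (N + 1) → ℝ)).symm with he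
  have hvol := EuclideanSpace.volume_preserving_symm_measurableEquiv_toLp (Fin (N + 1))
  set q := MeasurableEquiv.piFinSuccAbove (fun _ : Fin (N + 1) => ℝ) i with hq
  have hqvol : MeasurePreserving q volume ((volume : Measure ℝ).prod volume) := by
    have := measurePreserving_piFinSuccAbove (fun _ : Fin (N + 1) => (volume : Measure ℝ)) i
    simpa [volume_pi, hq] using this
  -- transfer to Pi
  have h1 : ∫ v, pD i f v = ∫ y : Fin (N + 1) → ℝ, pD i f (e.symm y) :=
    ((hvol.symm e).integral_comp e.symm.measurableEmbedding (pD i f)).symm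
  have hGint : Integrable (fun y : Fin (N + 1) → ℝ => pD i f (e.symm y)) :=
    ((hvol.symm e).integrable_comp_emb e.symm.measurableEmbedding).2 hgint
  have h2 : ∫ y : Fin (N + 1) → ℝ, pD i f (e.symm y)
      = ∫ z : ℝ × (Fin N → ℝ), pD i f (e.symm (q.symm z)) :=
    ((hqvol.symm q).integral_comp q.symm.measurableEmbedding _).symm
  have hGint2 : Integrable (fun z : ℝ × (Fin N → ℝ) => pD i f (e.symm (q.symm z)))
      ((volume : Measure ℝ).prod volume) :=
    ((hqvol.symm q).integrable_comp_emb q.symm.measurableEmbedding).2 hGint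
  rw [h1, h2, MeasureTheory.Measure.volume_eq_prod, MeasureTheory.integral_prod_symm _ hGint2]
  have key : ∀ rest : Fin N → ℝ, ∀ t : ℝ,
      e.symm (q.symm (t, rest))
        = e.symm (q.symm (0, rest)) + t • EuclideanSpace.single i 1 := by
    intro rest t
    ext j
    show (Fin.insertNthEquiv (fun _ => ℝ) i) (t, rest) j
        = (Fin.insertNthEquiv (fun _ => ℝ) i) (0, rest) j + t * (EuclideanSpace.single i 1) j
    simp only [Fin.insertNthEquiv_apply]
    refine Fin.succAboveCases i ?_ ?_ j
    · simp [EuclideanSpace.single_apply]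
    · intro k
      simp [EuclideanSpace.single_apply, Fin.succAbove_ne i k]
  have inner0 : ∀ rest : Fin N → ℝ, (∫ t : ℝ, pD i f (e.symm (q.symm (t, rest)))) = 0 := by
    intro rest
    have := integral_line_pD_zero i f hf hc (e.symm (q.symm (0, rest)))
    calc (∫ t : ℝ, pD i f (e.symm (q.symm (t, rest))))
        = ∫ t : ℝ, pD i f (e.symm (q.symm (0, rest)) + t • EuclideanSpace.single i 1) := by
          congr 1; funext t; rw [key rest t]
      _ = 0 := this
  simp only [inner0, integral_zero]

/-! ### Part 2: the flux functions and the pointwise divergence identity -/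

def coordF {N : ℕ} (k : Fin N) : EuclideanSpace ℝ (Fin N) → ℝ := fun v => v k

@[fun_prop] lemma differentiable_coordF {N : ℕ} (k : Fin N) :
    Differentiable ℝ (coordF k) := (EuclideanSpace.proj (𝕜 := ℝ) k).differentiable

@[fun_prop] lemma contDiff_coordF {N : ℕ} (k : Fin N) :
    ContDiff ℝ (⊤ : ℕ∞) (coordF k) := (EuclideanSpace.proj (𝕜 := ℝ) k).contDiff

lemma pD_coordF {N : ℕ} (j k : Fin N) (v : EuclideanSpace ℝ (Fin N)) :
    pD j (coordF k) v = if k = j then 1 else 0 := by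
  have h : coordF k = (EuclideanSpace.proj (𝕜 := ℝ) k) := rfl
  rw [pD, h, ContinuousLinearMap.fderiv]
  simp [EuclideanSpace.proj, EuclideanSpace.single_apply]

noncomputable def EnF (N : ℕ) (σ : ℝ) : EuclideanSpace ℝ (Fin N) → ℝ :=
  fun v => Real.exp (-(∑ k, coordF k v * coordF k v) / (2 * σ ^ 2))

@[fun_prop] lemma contDiff_EnF (N : ℕ) (σ : ℝ) : ContDiff ℝ (⊤ : ℕ∞) (EnF N σ) := by
  unfold EnF
  exact (((ContDiff.sum (fun k _ =>
    (contDiff_coordF k).mul (contDiff_coordF k))).neg).div_const _).exp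

@[fun_prop] lemma differentiable_EnF (N : ℕ) (σ : ℝ) : Differentiable ℝ (EnF N σ) :=
  (contDiff_EnF N σ).differentiable (by simp)

lemma pD_EnF (N : ℕ) (σ : ℝ) (j : Fin N) (v : EuclideanSpace ℝ (Fin N)) :
    pD j (EnF N σ) v = -(coordF j v / σ ^ 2) * EnF N σ v := by
  unfold EnF
  rw [show (fun v : EuclideanSpace ℝ (Fin N) => Real.exp (-(∑ k, coordF k v * coordF k v) / (2 * σ ^ 2)))
    = fun v => Real.exp ((-(∑ k, coordF k v * coordF k v)) / (2 * σ ^ 2)) from rfl]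
  rw [pD_exp _ _ (by fun_prop), pD_div_const _ _ _ (by fun_prop), pD_neg,
    pD_sum _ _ (fun k _ => by fun_prop)]
  have h : ∀ k : Fin N, pD j (fun w => coordF k w * coordF k w) v
      = (if k = j then 1 else 0) * coordF k v + coordF k v * (if k = j then 1 else 0) := by
    intro k
    rw [pD_mul _ _ (by fun_prop) (by fun_prop), pD_coordF]
  simp only [h, ite_mul, mul_ite, one_mul, mul_one, zero_mul, mul_zero,
    Finset.sum_add_distrib, Finset.sum_ite_eq', Finset.mem_univ, if_true]
  ring

lemma sum_decomp3 {ι : Type*} (s : Finset ι) (a b c : ι → ℝ) (α β γ : ℝ) :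
    ∑ i ∈ s, (a i * α + b i * β + c i * γ)
      = (∑ i ∈ s, a i) * α + (∑ i ∈ s, b i) * β + (∑ i ∈ s, c i) * γ := by
  simp only [Finset.sum_add_distrib, Finset.sum_mul]

section Flux
variable {n : ℕ} (lam : Fin n → ℝ) (σ T : ℝ) (Φ : EuclideanSpace ℝ (Fin (n + 1)) → ℝ)

noncomputable def FcF (i : Fin n) : EuclideanSpace ℝ (Fin (n + 1)) → ℝ := fun v =>
  -2 * lam i * (coordF (Fin.last n) v * coordF (Fin.last n) v * coordF (Fin.last n) v
        * pD i.castSucc Φ v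
      + coordF i.castSucc v * (2 * coordF (Fin.last n) v
          - coordF (Fin.last n) v * coordF (Fin.last n) v * coordF (Fin.last n) v / σ ^ 2)
        * Φ v) * EnF (n + 1) σ v

noncomputable def FlP (i : Fin n) : EuclideanSpace ℝ (Fin (n + 1)) → ℝ := fun v =>
  -2 * lam i * (coordF i.castSucc v * coordF i.castSucc v
        * (coordF (Fin.last n) v * pD (Fin.last n) Φ v)
      - 2 * (coordF i.castSucc v * (coordF (Fin.last n) v * coordF (Fin.last n) v
        * pD i.castSucc Φ v))
      - (1 - coordF i.castSucc v * coordF i.castSucc v / σ ^ 2)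
        * (coordF (Fin.last n) v * coordF (Fin.last n) v * Φ v)) * EnF (n + 1) σ v

noncomputable def FlT : EuclideanSpace ℝ (Fin (n + 1)) → ℝ := fun v =>
  -2 * T * (coordF (Fin.last n) v * pD (Fin.last n) Φ v) * EnF (n + 1) σ v

noncomputable def FlF : EuclideanSpace ℝ (Fin (n + 1)) → ℝ := fun v =>
  (∑ i : Fin n, FlP lam σ Φ i v) + FlT σ T Φ v

lemma contDiff_FcF (hΦ : ContDiff ℝ (⊤ : ℕ∞) Φ) (i : Fin n) : ContDiff ℝ (⊤ : ℕ∞) (FcF lam σ Φ i) := by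
  have W := contDiff_coordF (N := n + 1) (Fin.last n)
  have X := contDiff_coordF (N := n + 1) i.castSucc
  have hp : ∀ k, ContDiff ℝ (⊤ : ℕ∞) (pD k Φ) := fun k => contDiff_pD k hΦ
  exact ((contDiff_const.mul ((((W.mul W).mul W).mul (hp i.castSucc)).add
    ((X.mul ((contDiff_const.mul W).sub (((W.mul W).mul W).div_const _))).mul hΦ))).mul
    (contDiff_EnF _ _))

lemma contDiff_FlP (hΦ : ContDiff ℝ (⊤ : ℕ∞) Φ) (i : Fin n) : ContDiff ℝ (⊤ : ℕ∞) (FlP lam σ Φ i) := by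
  have W := contDiff_coordF (N := n + 1) (Fin.last n)
  have X := contDiff_coordF (N := n + 1) i.castSucc
  have hp : ∀ k, ContDiff ℝ (⊤ : ℕ∞) (pD k Φ) := fun k => contDiff_pD k hΦ
  exact ((contDiff_const.mul ((((X.mul X).mul (W.mul (hp (Fin.last n)))).sub
    (contDiff_const.mul (X.mul ((W.mul W).mul (hp i.castSucc))))).sub
    ((contDiff_const.sub ((X.mul X).div_const _)).mul ((W.mul W).mul hΦ)))).mul
    (contDiff_EnF _ _))

lemma contDiff_FlT (hΦ : ContDiff ℝ (⊤ : ℕ∞) Φ) : ContDiff ℝ (⊤ : ℕ∞) (FlT σ T Φ) := by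
  have W := contDiff_coordF (N := n + 1) (Fin.last n)
  have hp : ∀ k, ContDiff ℝ (⊤ : ℕ∞) (pD k Φ) := fun k => contDiff_pD k hΦ
  exact (contDiff_const.mul (W.mul (hp (Fin.last n)))).mul (contDiff_EnF _ _)

lemma contDiff_FlF (hΦ : ContDiff ℝ (⊤ : ℕ∞) Φ) : ContDiff ℝ (⊤ : ℕ∞) (FlF lam σ T Φ) :=
  (ContDiff.sum fun i _ => contDiff_FlP lam σ Φ hΦ i).add (contDiff_FlT σ T Φ hΦ)

lemma perI (hΦ : ContDiff ℝ (⊤ : ℕ∞) Φ) (hσ : σ ≠ 0) (i : Fin n)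
    (v : EuclideanSpace ℝ (Fin (n + 1))) (hw : v (Fin.last n) ≠ 0) :
    pD i.castSucc (FcF lam σ Φ i) v + pD (Fin.last n) (FlP lam σ Φ i) v
      = lam i * v i.castSucc ^ 2
          * (2 * (((1 / v (Fin.last n) - v (Fin.last n) / σ ^ 2) * pD (Fin.last n) Φ v
              + pD (Fin.last n) (pD (Fin.last n) Φ) v)
            + σ ^ (-2 : ℤ) * (v (Fin.last n) * pD (Fin.last n) Φ v))
            * (-(v (Fin.last n)) * EnF (n + 1) σ v))
        + lam i * (2 * (-(v (Fin.last n) * pD (Fin.last n) Φ v))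
            * (-(v (Fin.last n)) * EnF (n + 1) σ v))
        + lam i * (-2 * v i.castSucc * pD i.castSucc Φ v
            + v (Fin.last n) ^ 2 * pD i.castSucc (pD i.castSucc Φ) v
            - 2 * v i.castSucc * v (Fin.last n) * pD (Fin.last n) (pD i.castSucc Φ) v)
          * (2 * (-(v (Fin.last n)) * EnF (n + 1) σ v)) := by
  have hΦd : Differentiable ℝ Φ := hΦ.differentiable (by simp)
  have hd : ∀ k, Differentiable ℝ (pD k Φ) := fun k => differentiable_pD k hΦ
  have hne1 : ∀ (a : Fin n), (Fin.last n = a.castSucc) = False :=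
    fun a => by simp [(Fin.castSucc_lt_last a).ne']
  have hne2 : ∀ (a : Fin n), (a.castSucc = Fin.last n) = False :=
    fun a => by simp [(Fin.castSucc_lt_last a).ne]
  unfold FcF FlP
  simp (disch := fun_prop) only [pD_mul, pD_add, pD_sub, pD_const,
    pD_div_const, pD_coordF, pD_EnF, hne1, hne2, if_false, eq_self_iff_true, if_true]
  simp only [coordF, zpow_neg, zpow_two]
  field_simp
  ring

lemma perT (hΦ : ContDiff ℝ (⊤ : ℕ∞) Φ) (hσ : σ ≠ 0)
    (v : EuclideanSpace ℝ (Fin (n + 1))) (hw : v (Fin.last n) ≠ 0) :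
    pD (Fin.last n) (FlT σ T Φ) v
      = T * (2 * (((1 / v (Fin.last n) - v (Fin.last n) / σ ^ 2) * pD (Fin.last n) Φ v
          + pD (Fin.last n) (pD (Fin.last n) Φ) v))
          * (-(v (Fin.last n)) * EnF (n + 1) σ v)) := by
  have hΦd : Differentiable ℝ Φ := hΦ.differentiable (by simp)
  have hd : ∀ k, Differentiable ℝ (pD k Φ) := fun k => differentiable_pD k hΦ
  unfold FlT
  simp (disch := fun_prop) only [pD_mul, pD_add, pD_sub, pD_const,
    pD_div_const, pD_coordF, pD_EnF, eq_self_iff_true, if_true]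
  simp only [coordF]
  field_simp
  ring

lemma pD_FlF_split (hΦ : ContDiff ℝ (⊤ : ℕ∞) Φ) (v : EuclideanSpace ℝ (Fin (n + 1))) :
    pD (Fin.last n) (FlF lam σ T Φ) v
      = (∑ i : Fin n, pD (Fin.last n) (FlP lam σ Φ i) v) + pD (Fin.last n) (FlT σ T Φ) v := by
  have hΦd : Differentiable ℝ Φ := hΦ.differentiable (by simp)
  have hd : ∀ k, Differentiable ℝ (pD k Φ) := fun k => differentiable_pD k hΦ
  unfold FlF
  rw [pD_add _ _ (by apply DifferentiableAt.fun_sum; intro i _; unfold FlP; fun_prop)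
      (by unfold FlT; fun_prop),
    pD_sum _ _ (fun i _ => by unfold FlP; fun_prop)]


lemma key_identity (hΦ : ContDiff ℝ (⊤ : ℕ∞) Φ) (hσ : σ ≠ 0)
    (v : EuclideanSpace ℝ (Fin (n + 1))) (hw : v (Fin.last n) ≠ 0) :
    (∑ i : Fin n, pD i.castSucc (FcF lam σ Φ i) v) + pD (Fin.last n) (FlF lam σ T Φ) v
      = MBLap n lam σ T Φ v * (-(v (Fin.last n)) * EnF (n + 1) σ v) := by
  have hsym : ∀ i : Fin n,
      pD i.castSucc (pD (Fin.last n) Φ) v = pD (Fin.last n) (pD i.castSucc Φ) v :=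
    fun i => pD_pD_symm hΦ _ _ v
  rw [pD_FlF_split lam σ T Φ hΦ, ← add_assoc, ← Finset.sum_add_distrib,
    Finset.sum_congr rfl (fun i _ => perI lam σ Φ hΦ hσ i v hw),
    perT σ T Φ hΦ hσ v hw, sum_decomp3]
  simp only [MBLap, hsym, zpow_neg, zpow_two]
  field_simp
  ring

end Flux



/-- the Maxwell–Boltzmann measure `ρ dv` on the lower half-space
`H = {v : v_m < 0}` is stationary for the MB-diffusion: `∫_H (LΦ) ρ dv = 0` for
all smooth compactly supported `Φ` (here `m = n + 1`, `n ≥ 1`). -/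
theorem stmt_15 (n : ℕ) (hn : 1 ≤ n) (lam : Fin n → ℝ) (hlam : ∀ i, 0 ≤ lam i)
    (σ T : ℝ) (hσ : 0 < σ) (hT : 0 ≤ T)
    (H : Set (EuclideanSpace ℝ (Fin (n + 1))))
    (hH : H = {v : EuclideanSpace ℝ (Fin (n + 1)) | v (Fin.last n) < 0})
    (ρ : EuclideanSpace ℝ (Fin (n + 1)) → ℝ)
    (hρ : ∀ v, ρ v = |v (Fin.last n)| * Real.exp (-‖v‖ ^ 2 / (2 * σ ^ 2)))
    (Φ : EuclideanSpace ℝ (Fin (n + 1)) → ℝ)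
    (hΦ : ContDiff ℝ (⊤ : ℕ∞) Φ) (hΦc : HasCompactSupport Φ) (hΦs : tsupport Φ ⊆ H) :
    ∫ v in H, MBLap n lam σ T Φ v * ρ v = 0 := by
  subst hH
  have hσ' : σ ≠ 0 := hσ.ne'
  have hΦd : Differentiable ℝ Φ := hΦ.differentiable (by simp)
  have hcd : ∀ k, ContDiff ℝ (⊤ : ℕ∞) (pD k Φ) := fun k => contDiff_pD k hΦ
  have hd : ∀ k, Differentiable ℝ (pD k Φ) := fun k => differentiable_pD k hΦ
  have hmeas : MeasurableSet {v : EuclideanSpace ℝ (Fin (n + 1)) | v (Fin.last n) < 0} :=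
    measurableSet_lt ((EuclideanSpace.proj (𝕜 := ℝ) (Fin.last n)).continuous.measurable)
      measurable_const
  -- rewrite ρ on the half-space
  have hρv : ∀ v : EuclideanSpace ℝ (Fin (n + 1)), v (Fin.last n) < 0 →
      ρ v = -(v (Fin.last n)) * EnF (n + 1) σ v := by
    intro v hv
    have hnorm : ‖v‖ ^ 2 = ∑ k : Fin (n + 1), v k * v k := by
      rw [EuclideanSpace.norm_eq, Real.sq_sqrt (Finset.sum_nonneg fun k _ => sq_nonneg _)]
      refine Finset.sum_congr rfl fun k _ => ?_
      rw [Real.norm_eq_abs, sq_abs, sq]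
    rw [hρ v, abs_of_neg hv, EnF, hnorm]
    rfl
  -- support facts
  have hsupFc : ∀ i, Function.support (FcF lam σ Φ i) ⊆ tsupport Φ := by
    intro i v hv
    by_contra h
    apply hv
    unfold FcF
    rw [image_eq_zero_of_notMem_tsupport h, pD_eq_zero_of_not_mem i.castSucc h]
    ring
  have hsupFl : Function.support (FlF lam σ T Φ) ⊆ tsupport Φ := by
    intro v hv
    by_contra h
    apply hv
    unfold FlF FlP FlT
    rw [Finset.sum_eq_zero (fun i (_ : i ∈ Finset.univ) => by
      rw [image_eq_zero_of_notMem_tsupport h, pD_eq_zero_of_not_mem i.castSucc h,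
        pD_eq_zero_of_not_mem (Fin.last n) h]; ring),
      pD_eq_zero_of_not_mem (Fin.last n) h]
    ring
  have htsFc : ∀ i, tsupport (FcF lam σ Φ i) ⊆ tsupport Φ :=
    fun i => closure_minimal (hsupFc i) (isClosed_tsupport Φ)
  have htsFl : tsupport (FlF lam σ T Φ) ⊆ tsupport Φ :=
    closure_minimal hsupFl (isClosed_tsupport Φ)
  have hcsFc : ∀ i, HasCompactSupport (FcF lam σ Φ i) := fun i => hΦc.mono' (hsupFc i)
  have hcsFl : HasCompactSupport (FlF lam σ T Φ) := hΦc.mono' hsupFl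
  have hcdFc : ∀ i, ContDiff ℝ (⊤ : ℕ∞) (FcF lam σ Φ i) := contDiff_FcF lam σ Φ hΦ
  have hcdFl : ContDiff ℝ (⊤ : ℕ∞) (FlF lam σ T Φ) := contDiff_FlF lam σ T Φ hΦ
  -- the divergence field
  set D : EuclideanSpace ℝ (Fin (n + 1)) → ℝ := fun v =>
    (∑ i : Fin n, pD i.castSucc (FcF lam σ Φ i) v) + pD (Fin.last n) (FlF lam σ T Φ) v
    with hD
  have hEq : Set.EqOn (fun v => MBLap n lam σ T Φ v * ρ v) D
      {v : EuclideanSpace ℝ (Fin (n + 1)) | v (Fin.last n) < 0} := by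
    intro v hv
    have hv' : v (Fin.last n) < 0 := hv
    show MBLap n lam σ T Φ v * ρ v = D v
    rw [hρv v hv', hD]
    exact (key_identity lam σ T Φ hΦ hσ' v hv'.ne).symm
  rw [setIntegral_congr_fun hmeas hEq]
  have hzero : ∀ v ∉ {v : EuclideanSpace ℝ (Fin (n + 1)) | v (Fin.last n) < 0}, D v = 0 := by
    intro v hv
    have hvn : v ∉ tsupport Φ := fun hmem => hv (hΦs hmem)
    rw [hD]
    have h1 : ∀ i : Fin n, pD i.castSucc (FcF lam σ Φ i) v = 0 := fun i =>
      pD_eq_zero_of_not_mem _ (fun hc => hvn (htsFc i hc))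
    have h2 : pD (Fin.last n) (FlF lam σ T Φ) v = 0 :=
      pD_eq_zero_of_not_mem _ (fun hc => hvn (htsFl hc))
    simp only [h1, h2, Finset.sum_const_zero, add_zero]
  rw [setIntegral_eq_integral_of_forall_compl_eq_zero hzero]
  have hintc : ∀ i : Fin n, Integrable (pD i.castSucc (FcF lam σ Φ i)) :=
    fun i => ((contDiff_pD _ (hcdFc i)).continuous).integrable_of_hasCompactSupport
      (hasCompactSupport_pD _ (hcsFc i))
  have hintl : Integrable (pD (Fin.last n) (FlF lam σ T Φ)) :=
    ((contDiff_pD _ hcdFl).continuous).integrable_of_hasCompactSupport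
      (hasCompactSupport_pD _ hcsFl)
  rw [hD, integral_add (integrable_finset_sum _ fun i _ => hintc i) hintl,
    integral_finset_sum _ fun i _ => hintc i]
  rw [Finset.sum_eq_zero fun i _ => integral_pD_eq_zero i.castSucc _ (hcdFc i) (hcsFc i),
    integral_pD_eq_zero _ _ hcdFl hcsFl, add_zero]
end

section
/- Let m ≥ 2, λ₁, …, λ_{m−1} ≥ 0, σ > 0, T ≥ 0, let H = {v ∈ ℝ^m : v_m < 0}, and let L be the MB-Laplacian defined by (1/2)(LΦ)(v) = (Σ_{i<m} λᵢ vᵢ² + T)[(1/v_m − v_m/σ²) Φ_m(v) + Φ_{mm}(v)] + Σ_{i<m} λᵢ( −2 vᵢ Φᵢ(v) + v_m² Φᵢᵢ(v) − 2 vᵢ v_m Φ_{im}(v) ) − (Σ_{i<m} λᵢ − σ^{-2} Σ_{i<m} λᵢ vᵢ²) v_m Φ_m(v), where subscripts denote partial derivatives. Then for the function Φ(v) = ‖v‖² one has (LΦ)(v) = 8T − 4T v_m²/σ² for every v ∈ H. Consequently, L‖v‖² vanishes identically on H if and only if T = 0. -/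
open Finset

/-!
The gradient of `‖v‖²` is `2v` and its Hessian is `2 I`, so the mixed derivatives drop out
and every `λᵢ`-term of the MB-Laplacian cancels, leaving `2T(4 - 2v_m²/σ²)`. For the converse,
evaluating at `v = -σ e_m ∈ H` gives `0 = 8T - 4T`.
-/

lemma pD_norm_sq {N : ℕ} (i : Fin N) (v : EuclideanSpace ℝ (Fin N)) :
    pD i (fun u : EuclideanSpace ℝ (Fin N) => ‖u‖ ^ 2) v = 2 * v i := by
  rw [pD, (hasStrictFDerivAt_norm_sq v).hasFDerivAt.fderiv]
  simp [EuclideanSpace.inner_single_right]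

lemma pD_const_mul_coord {N : ℕ} (c : ℝ) (i j : Fin N) (v : EuclideanSpace ℝ (Fin N)) :
    pD j (fun u : EuclideanSpace ℝ (Fin N) => c * u i) v = if j = i then c else 0 := by
  have h : HasFDerivAt (fun u : EuclideanSpace ℝ (Fin N) => c * u i)
      (c • (EuclideanSpace.proj i : EuclideanSpace ℝ (Fin N) →L[ℝ] ℝ)) v :=
    (EuclideanSpace.proj (𝕜 := ℝ) (ι := Fin N) i).hasFDerivAt.const_mul c
  rw [pD, h.fderiv]
  simp [eq_comm]

lemma pD_pD_norm_sq {N : ℕ} (i j : Fin N) (v : EuclideanSpace ℝ (Fin N)) :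
    pD j (pD i (fun u : EuclideanSpace ℝ (Fin N) => ‖u‖ ^ 2)) v = if j = i then 2 else 0 := by
  rw [show pD i (fun u : EuclideanSpace ℝ (Fin N) => ‖u‖ ^ 2) = fun u => 2 * u i from
    funext (pD_norm_sq i), pD_const_mul_coord]

lemma MBLap_norm_sq (n : ℕ) (lam : Fin n → ℝ) (σ T : ℝ) {v : EuclideanSpace ℝ (Fin (n + 1))}
    (hv : v (Fin.last n) ≠ 0) :
    MBLap n lam σ T (fun u => ‖u‖ ^ 2) v = 8 * T - 4 * T * v (Fin.last n) ^ 2 / σ ^ 2 := by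
  have hsum : ∑ i : Fin n, lam i *
      (-2 * v i.castSucc * (2 * v i.castSucc) + v (Fin.last n) ^ 2 * 2
        - 2 * v i.castSucc * v (Fin.last n) * 0)
      = -4 * ∑ i : Fin n, lam i * v i.castSucc ^ 2
        + 2 * v (Fin.last n) ^ 2 * ∑ i : Fin n, lam i := by
    rw [mul_sum, mul_sum, ← sum_add_distrib]
    exact sum_congr rfl fun i _ => by ring
  simp only [MBLap, pD_norm_sq, pD_pD_norm_sq, if_true,
    if_neg (Fin.castSucc_lt_last _).ne, hsum, zpow_neg, zpow_two, ← sq]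
  field_simp
  ring

theorem stmt_16_general (n : ℕ) (lam : Fin n → ℝ)
    (σ T : ℝ) (hσ : 0 < σ)
    (H : Set (EuclideanSpace ℝ (Fin (n + 1))))
    (hH : H = {v : EuclideanSpace ℝ (Fin (n + 1)) | v (Fin.last n) < 0}) :
    (∀ v ∈ H, MBLap n lam σ T (fun u => ‖u‖ ^ 2) v
        = 8 * T - 4 * T * v (Fin.last n) ^ 2 / σ ^ 2) ∧
    ((∀ v ∈ H, MBLap n lam σ T (fun u => ‖u‖ ^ 2) v = 0) ↔ T = 0) := by
  subst hH
  have key : ∀ v : EuclideanSpace ℝ (Fin (n + 1)), v (Fin.last n) < 0 →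
      MBLap n lam σ T (fun u => ‖u‖ ^ 2) v = 8 * T - 4 * T * v (Fin.last n) ^ 2 / σ ^ 2 :=
    fun v hv => MBLap_norm_sq n lam σ T hv.ne
  refine ⟨key, fun h => ?_, fun hT v hv => by rw [key v hv, hT]; ring⟩
  set v : EuclideanSpace ℝ (Fin (n + 1)) := EuclideanSpace.single (Fin.last n) (-σ)
  have hv : v (Fin.last n) = -σ := by simp [v]
  have hvH : v (Fin.last n) < 0 := by linarith
  have h0 := key v hvH
  rw [h v hvH, hv, neg_sq, mul_div_assoc, div_self (pow_ne_zero 2 hσ.ne')] at h0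
  linarith

/-- the MB-Laplacian applied to `‖v‖²` equals
`8T − 4T v_m²/σ²` on the lower half-space `H = {v : v_m < 0}`; consequently
`L‖v‖²` vanishes identically on `H` if and only if `T = 0`
(here `m = n + 1`, `n ≥ 1`). -/
theorem stmt_16 (n : ℕ) (hn : 1 ≤ n) (lam : Fin n → ℝ) (hlam : ∀ i, 0 ≤ lam i)
    (σ T : ℝ) (hσ : 0 < σ) (hT : 0 ≤ T)
    (H : Set (EuclideanSpace ℝ (Fin (n + 1))))
    (hH : H = {v : EuclideanSpace ℝ (Fin (n + 1)) | v (Fin.last n) < 0}) :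
    (∀ v ∈ H, MBLap n lam σ T (fun u => ‖u‖ ^ 2) v
        = 8 * T - 4 * T * v (Fin.last n) ^ 2 / σ ^ 2) ∧
    ((∀ v ∈ H, MBLap n lam σ T (fun u => ‖u‖ ^ 2) v = 0) ↔ T = 0) :=
  stmt_16_general n lam σ T hσ H hH
end

section
/- Let m ≥ 2, λ₁, …, λ_{m−1} ≥ 0, σ > 0, T ≥ 0, let H = {v ∈ ℝ^m : v_m < 0}, and let L be the MB-Laplacian defined by (1/2)(LΦ)(v) = (Σ_{i<m} λᵢ vᵢ² + T)[(1/v_m − v_m/σ²) Φ_m(v) + Φ_{mm}(v)] + Σ_{i<m} λᵢ( −2 vᵢ Φᵢ(v) + v_m² Φᵢᵢ(v) − 2 vᵢ v_m Φ_{im}(v) ) − (Σ_{i<m} λᵢ − σ^{-2} Σ_{i<m} λᵢ vᵢ²) v_m Φ_m(v), where subscripts denote partial derivatives. Then there exist a smooth function φ : H → ℝ with φ > 0 everywhere and a constant λ > 0 such that (Lφ)(v) ≤ λ φ(v) for all v ∈ H, and φ(v) → ∞ as v leaves every compact subset of H (that is, φ tends to infinity along the cocompact filter of H; equivalently, φ(v_n)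 → ∞ whenever ‖v_n‖ → ∞ or the last coordinate of v_n tends to 0). -/
open Finset Filter

noncomputable abbrev prj {n : ℕ} (j : Fin (n + 1)) :
    EuclideanSpace ℝ (Fin (n + 1)) →L[ℝ] ℝ := EuclideanSpace.proj j

lemma prj_hasFDerivAt {n : ℕ} (j : Fin (n + 1)) (v : EuclideanSpace ℝ (Fin (n + 1))) :
    HasFDerivAt (fun u : EuclideanSpace ℝ (Fin (n + 1)) => u j) (prj j) v :=
  (prj j).hasFDerivAt

noncomputable def myPhi (n : ℕ) : EuclideanSpace ℝ (Fin (n + 1)) → ℝ :=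
  fun v => (∑ j, v j ^ 2) + (1 - Real.log (-(v (Fin.last n))))

lemma myPhi_hasFDerivAt (n : ℕ) (v : EuclideanSpace ℝ (Fin (n + 1)))
    (hv : v (Fin.last n) ≠ 0) :
    HasFDerivAt (myPhi n)
      ((∑ j, (2 * v j) • prj j) - (v (Fin.last n))⁻¹ • prj (Fin.last n)) v := by
  have hS : HasFDerivAt (fun u : EuclideanSpace ℝ (Fin (n + 1)) => ∑ j, u j ^ 2)
      (∑ j, (2 * v j) • prj (n := n) j) v := by
    apply HasFDerivAt.fun_sum
    intro j _
    have hp := prj_hasFDerivAt j v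
    have heq : (fun u : EuclideanSpace ℝ (Fin (n + 1)) => u j ^ 2)
        = fun u => u j * u j := by ext u; ring
    rw [heq]
    refine (hp.fun_mul hp).congr_fderiv ?_
    ext u
    simp
    ring
  have hlog : HasFDerivAt
      (fun u : EuclideanSpace ℝ (Fin (n + 1)) => Real.log (-(u (Fin.last n))))
      ((-(v (Fin.last n)))⁻¹ • (-(prj (Fin.last n)))) v := by
    have := (Real.hasDerivAt_log (neg_ne_zero.2 hv)).comp_hasFDerivAt v
      (prj_hasFDerivAt (Fin.last n) v).fun_neg
    exact this
  have h := hS.add ((hasFDerivAt_const (1 : ℝ) v).sub hlog)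
  refine HasFDerivAt.congr_fderiv (f := myPhi n) h ?_
  ext u
  simp [hv]
  ring

lemma pD_last (n : ℕ) (v : EuclideanSpace ℝ (Fin (n + 1))) (hv : v (Fin.last n) ≠ 0) :
    pD (Fin.last n) (myPhi n) v = 2 * v (Fin.last n) - (v (Fin.last n))⁻¹ := by
  rw [pD, (myPhi_hasFDerivAt n v hv).fderiv]
  simp [EuclideanSpace.single_apply, Finset.sum_ite_eq]

lemma pD_castSucc (n : ℕ) (i : Fin n) (v : EuclideanSpace ℝ (Fin (n + 1)))
    (hv : v (Fin.last n) ≠ 0) :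
    pD i.castSucc (myPhi n) v = 2 * v i.castSucc := by
  rw [pD, (myPhi_hasFDerivAt n v hv).fderiv]
  have hne : Fin.last n ≠ i.castSucc := (Fin.castSucc_lt_last i).ne'
  simp [EuclideanSpace.single_apply, Finset.sum_ite_eq, hne]

lemma isOpen_ne_zero (n : ℕ) :
    IsOpen {u : EuclideanSpace ℝ (Fin (n + 1)) | u (Fin.last n) ≠ 0} :=
  isOpen_compl_singleton.preimage (prj (Fin.last n)).continuous

lemma pD_last_eventuallyEq (n : ℕ) (v : EuclideanSpace ℝ (Fin (n + 1)))
    (hv : v (Fin.last n) ≠ 0) :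
    pD (Fin.last n) (myPhi n)
      =ᶠ[nhds v] fun u => 2 * u (Fin.last n) - (u (Fin.last n))⁻¹ :=
  Filter.eventuallyEq_of_mem ((isOpen_ne_zero n).mem_nhds hv)
    (fun u hu => pD_last n u hu)

lemma pD_castSucc_eventuallyEq (n : ℕ) (i : Fin n) (v : EuclideanSpace ℝ (Fin (n + 1)))
    (hv : v (Fin.last n) ≠ 0) :
    pD i.castSucc (myPhi n) =ᶠ[nhds v] fun u => 2 * u i.castSucc :=
  Filter.eventuallyEq_of_mem ((isOpen_ne_zero n).mem_nhds hv)
    (fun u hu => pD_castSucc n i u hu)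

lemma pD2_last_last (n : ℕ) (v : EuclideanSpace ℝ (Fin (n + 1)))
    (hv : v (Fin.last n) ≠ 0) :
    pD (Fin.last n) (pD (Fin.last n) (myPhi n)) v = 2 + ((v (Fin.last n)) ^ 2)⁻¹ := by
  have hg : HasFDerivAt
      (fun u : EuclideanSpace ℝ (Fin (n + 1)) =>
        2 * u (Fin.last n) - (u (Fin.last n))⁻¹)
      ((2 : ℝ) • prj (Fin.last n) - (-((v (Fin.last n)) ^ 2)⁻¹) • prj (Fin.last n)) v :=
    ((prj_hasFDerivAt (Fin.last n) v).const_mul 2).sub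
      ((hasDerivAt_inv hv).comp_hasFDerivAt v (prj_hasFDerivAt (Fin.last n) v))
  rw [pD, (pD_last_eventuallyEq n v hv).fderiv_eq, hg.fderiv]
  simp [EuclideanSpace.single_apply]

lemma pD2_castSucc_last (n : ℕ) (i : Fin n) (v : EuclideanSpace ℝ (Fin (n + 1)))
    (hv : v (Fin.last n) ≠ 0) :
    pD i.castSucc (pD (Fin.last n) (myPhi n)) v = 0 := by
  have hg : HasFDerivAt
      (fun u : EuclideanSpace ℝ (Fin (n + 1)) =>
        2 * u (Fin.last n) - (u (Fin.last n))⁻¹)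
      ((2 : ℝ) • prj (Fin.last n) - (-((v (Fin.last n)) ^ 2)⁻¹) • prj (Fin.last n)) v :=
    ((prj_hasFDerivAt (Fin.last n) v).const_mul 2).sub
      ((hasDerivAt_inv hv).comp_hasFDerivAt v (prj_hasFDerivAt (Fin.last n) v))
  rw [pD, (pD_last_eventuallyEq n v hv).fderiv_eq, hg.fderiv]
  have hne : Fin.last n ≠ i.castSucc := (Fin.castSucc_lt_last i).ne'
  simp [EuclideanSpace.single_apply, hne]

lemma pD2_castSucc_castSucc (n : ℕ) (i : Fin n) (v : EuclideanSpace ℝ (Fin (n + 1)))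
    (hv : v (Fin.last n) ≠ 0) :
    pD i.castSucc (pD i.castSucc (myPhi n)) v = 2 := by
  have hg : HasFDerivAt
      (fun u : EuclideanSpace ℝ (Fin (n + 1)) => 2 * u i.castSucc)
      ((2 : ℝ) • prj i.castSucc) v :=
    (prj_hasFDerivAt i.castSucc v).const_mul 2
  rw [pD, (pD_castSucc_eventuallyEq n i v hv).fderiv_eq, hg.fderiv]
  simp [EuclideanSpace.single_apply]

lemma myPhi_lb (n : ℕ) (v : EuclideanSpace ℝ (Fin (n + 1))) (hv : v (Fin.last n) < 0) :
    (∑ j, v j ^ 2) / 2 + 3 / 2 ≤ myPhi n v ∧ 1 - Real.log (-(v (Fin.last n))) ≤ myPhi n v := by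
  have hS : (0 : ℝ) ≤ ∑ j, v j ^ 2 := Finset.sum_nonneg fun j _ => sq_nonneg _
  have hw : v (Fin.last n) ^ 2 ≤ ∑ j, v j ^ 2 :=
    Finset.single_le_sum (f := fun j => v j ^ 2) (fun j _ => sq_nonneg _)
      (Finset.mem_univ _)
  have hlog : Real.log (-(v (Fin.last n))) ≤ -(v (Fin.last n)) - 1 :=
    Real.log_le_sub_one_of_pos (by linarith)
  constructor
  · rw [myPhi]; nlinarith [sq_nonneg (v (Fin.last n) + 1)]
  · rw [myPhi]; linarith

lemma myPhi_one_le (n : ℕ) (v : EuclideanSpace ℝ (Fin (n + 1)))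
    (hv : v (Fin.last n) < 0) : 1 ≤ myPhi n v := by
  have h := (myPhi_lb n v hv).1
  have hS : (0 : ℝ) ≤ ∑ j, v j ^ 2 := Finset.sum_nonneg fun j _ => sq_nonneg _
  linarith

lemma myPhi_contDiffOn (n : ℕ) :
    ContDiffOn ℝ (⊤ : ℕ∞) (myPhi n) {v : EuclideanSpace ℝ (Fin (n + 1)) | v (Fin.last n) < 0} := by
  intro v hv
  apply ContDiffAt.contDiffWithinAt
  have h1 : ContDiff ℝ (⊤ : ℕ∞) (fun u : EuclideanSpace ℝ (Fin (n + 1)) => ∑ j, u j ^ 2) :=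
    ContDiff.sum fun j _ => ((prj j).contDiff).pow 2
  have h2 : ContDiffAt ℝ (⊤ : ℕ∞)
      (fun u : EuclideanSpace ℝ (Fin (n + 1)) => Real.log (-(u (Fin.last n)))) v := by
    have hin : ContDiff ℝ (⊤ : ℕ∞) (fun u : EuclideanSpace ℝ (Fin (n + 1)) => -(u (Fin.last n))) :=
      (prj (Fin.last n)).contDiff.neg
    exact (Real.contDiffAt_log.2 (by simp only [Set.mem_setOf_eq] at hv; linarith)).comp v
      hin.contDiffAt
  exact h1.contDiffAt.add (contDiffAt_const.sub h2)

lemma MBLap_myPhi (n : ℕ) (lam : Fin n → ℝ) (σ T : ℝ) (hσ : σ ≠ 0)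
    (v : EuclideanSpace ℝ (Fin (n + 1))) (hv : v (Fin.last n) < 0) :
    MBLap n lam σ T (myPhi n) v
      = 8 * T + 2 * T / σ ^ 2 + 2 * (∑ i, lam i)
        - 4 * T * (v (Fin.last n)) ^ 2 / σ ^ 2 := by
  have hw : v (Fin.last n) ≠ 0 := hv.ne
  rw [MBLap]
  simp only [pD_last n v hw, pD2_last_last n v hw,
    pD_castSucc n _ v hw, pD2_castSucc_last n _ v hw, pD2_castSucc_castSucc n _ v hw]
  have hsum : ∑ i, lam i * (-2 * v i.castSucc * (2 * v i.castSucc)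
        + v (Fin.last n) ^ 2 * 2 - 2 * v i.castSucc * v (Fin.last n) * 0)
      = 2 * v (Fin.last n) ^ 2 * (∑ i, lam i)
        - 4 * (∑ i, lam i * v i.castSucc ^ 2) := by
    rw [Finset.mul_sum, Finset.mul_sum, ← Finset.sum_sub_distrib]
    exact Finset.sum_congr rfl fun i _ => by ring
  rw [hsum]
  have hσ2 : σ ^ (-2 : ℤ) = (σ ^ 2)⁻¹ := by
    rw [zpow_neg, zpow_two, sq]
  rw [hσ2]
  have hw2 : v (Fin.last n) ^ 2 ≠ 0 := pow_ne_zero 2 hw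
  have hσs : σ ^ 2 ≠ 0 := pow_ne_zero 2 hσ
  field_simp
  ring

/-- existence of a Lyapunov-type function for the MB-Laplacian on
the lower half-space `H = {v : v_m < 0}` (here `m = n + 1`, `n ≥ 1`): a smooth
positive `φ` with `Lφ ≤ λφ` on `H` that tends to infinity along the cocompact
filter of `H`. -/
theorem stmt_17 (n : ℕ) (hn : 1 ≤ n) (lam : Fin n → ℝ) (hlam : ∀ i, 0 ≤ lam i)
    (σ T : ℝ) (hσ : 0 < σ) (hT : 0 ≤ T)
    (H : Set (EuclideanSpace ℝ (Fin (n + 1))))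
    (hH : H = {v : EuclideanSpace ℝ (Fin (n + 1)) | v (Fin.last n) < 0}) :
    ∃ (φ : EuclideanSpace ℝ (Fin (n + 1)) → ℝ) (c : ℝ), 0 < c ∧
      ContDiffOn ℝ (⊤ : ℕ∞) φ H ∧
      (∀ v ∈ H, 0 < φ v) ∧
      (∀ v ∈ H, MBLap n lam σ T φ v ≤ c * φ v) ∧
      Tendsto (fun v : H => φ (v : EuclideanSpace ℝ (Fin (n + 1))))
        (cocompact H) atTop := by
  subst hH
  have hL : (0 : ℝ) ≤ ∑ i, lam i := Finset.sum_nonneg fun i _ => hlam i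
  have hσs : (0 : ℝ) < σ ^ 2 := by positivity
  refine ⟨myPhi n, 8 * T + 2 * T / σ ^ 2 + 2 * (∑ i, lam i) + 1, ?_, myPhi_contDiffOn n,
    ?_, ?_, ?_⟩
  · have h1 : (0 : ℝ) ≤ 2 * T / σ ^ 2 := by positivity
    linarith
  · intro v hv
    have := myPhi_one_le n v hv
    linarith
  · intro v hv
    have hv' : v (Fin.last n) < 0 := hv
    rw [MBLap_myPhi n lam σ T hσ.ne' v hv']
    have h1 := myPhi_one_le n v hv'
    have hq : (0 : ℝ) ≤ 4 * T * (v (Fin.last n)) ^ 2 / σ ^ 2 := by positivity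
    have hM : (0 : ℝ) ≤ 8 * T + 2 * T / σ ^ 2 + 2 * (∑ i, lam i) := by
      have : (0 : ℝ) ≤ 2 * T / σ ^ 2 := by positivity
      linarith
    nlinarith [mul_nonneg hM (by linarith : (0 : ℝ) ≤ myPhi n v - 1)]
  · rw [tendsto_atTop]
    intro b
    rw [eventually_iff, mem_cocompact]
    set ε := Real.exp (-b) with hε
    have hεpos : 0 < ε := Real.exp_pos _
    set R := Real.sqrt (max 0 (2 * b)) with hR
    have hR0 : 0 ≤ R := Real.sqrt_nonneg _
    set C : Set (EuclideanSpace ℝ (Fin (n + 1))) :=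
      Metric.closedBall 0 R ∩ {u | u (Fin.last n) ≤ -ε} with hC
    have hCc : IsCompact C :=
      (isCompact_closedBall 0 R).inter_right
        (isClosed_le (prj (Fin.last n)).continuous continuous_const)
    have hCH : C ⊆ {v : EuclideanSpace ℝ (Fin (n + 1)) | v (Fin.last n) < 0} := by
      intro u hu
      have := hu.2
      simp only [Set.mem_setOf_eq] at this ⊢
      linarith
    refine ⟨Subtype.val ⁻¹' C, ?_, ?_⟩
    · rw [Subtype.isCompact_iff, Set.image_preimage_eq_inter_range, Subtype.range_coe,
        Set.inter_eq_left.2 hCH]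
      exact hCc
    · rintro ⟨v, hvH⟩ hx
      simp only [Set.mem_compl_iff, Set.mem_preimage, hC, Set.mem_inter_iff,
        Metric.mem_closedBall, Set.mem_setOf_eq, not_and_or, not_le] at hx
      have hvH' : v (Fin.last n) < 0 := hvH
      simp only [Set.mem_setOf_eq]
      have hlb := myPhi_lb n v hvH'
      rcases hx with hx | hx
      · rw [dist_zero_right] at hx
        have hnorm : ‖v‖ ^ 2 = ∑ j, v j ^ 2 := by
          rw [EuclideanSpace.norm_eq, Real.sq_sqrt]
          · simp [Real.norm_eq_abs, sq_abs]
          · positivity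
        have hRsq : R ^ 2 = max 0 (2 * b) := Real.sq_sqrt (le_max_left _ _)
        have h2 : R ^ 2 < ‖v‖ ^ 2 := by
          apply pow_lt_pow_left₀ hx hR0
          norm_num
        have h3 : 2 * b ≤ max 0 (2 * b) := le_max_right _ _
        have := hlb.1
        rw [← hnorm] at this
        linarith [hRsq ▸ h2]
      · have h4 : -(v (Fin.last n)) < ε := by linarith
        have h5 : Real.log (-(v (Fin.last n))) < -b := by
          calc Real.log (-(v (Fin.last n))) < Real.log ε :=
                Real.log_lt_log (by linarith) h4
            _ = -b := by rw [hε, Real.log_exp]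
        have := hlb.2
        linarith
end
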